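/- arXiv:math/0002030 — 2 statements merged into one kernel-verified Lean document; each statement's English description precedes it below -/
import Mathlib

section
/- Let W be an increasing filtration of a finite-dimensional complex vector space V. Then the set Y(W) of all gradings of W is nonempty, and the nilpotent group exp(Lie₋₁), where Lie₋₁ = {α ∈ End(V) : α(W_k) ⊆ W_{k-1} for all k}, acts transitively on Y(W). -/
variable {V : Type*} [AddCommGroup V] [Module ℂ V]

def IsGrading (Y : Module.End ℂ V) (W : ℤ → Submodule ℂ V) : Prop :=
  ∀ k : ℤ, W k = Module.End.eigenspace Y (k : ℂ) ⊔ W (k - 1) ∧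
    Module.End.eigenspace Y (k : ℂ) ⊓ W (k - 1) = ⊥

/-- The exponential of a (nilpotent) endomorphism, as a finite sum. -/
noncomputable def expNil (α : Module.End ℂ V) : Module.End ℂ V :=
  ∑ i ∈ Finset.range (Module.finrank ℂ V + 1), ((i.factorial : ℂ))⁻¹ • α ^ i

/-!
Choosing complements `C k` of `W (k - 1)` in `W k` splits `V` as an internal direct sum, and the
endomorphism acting by `k` on `C k` is a grading. Given two gradings `Y₁` and `Y₂`, let `g` send
the `k`-eigenspace of `Y₁` into the `k`-eigenspace of `Y₂` by the eigenprojection of `Y₂` (a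
Lagrange interpolation polynomial in `Y₂`). Then `g * Y₁ = Y₂ * g` and `g - 1 ∈ Lie₋₁`. Such a
unipotent `g` is `exp α` for some `α ∈ Lie₋₁`: starting from `α = 0`, the correction
`α ↦ α + (g - exp α)` gains one filtration degree for `g - exp α` per step, because
`exp (α + δ) ≡ exp α + δ` modulo terms of higher degree, and the filtration has finite length.
-/

open Module End Polynomial

theorem iSupIndep.eq_of_le_of_iSup_eq_top {α ι : Type*} [CompleteLattice α] [IsModularLattice α]
    {C E : ι → α} (hE : iSupIndep E) (hle : C ≤ E) (hC : iSup C = ⊤) : C = E := by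
  funext i
  refine le_antisymm (hle i) (le_of_eq ?_)
  have hrest : (⨆ (j) (_ : j ≠ i), C j) ⊓ E i = ⊥ :=
    eq_bot_iff.2 <| (inf_le_inf_right _ (iSup₂_mono fun j _ => hle j)).trans
      (hE i).symm.le_bot
  calc E i = (C i ⊔ ⨆ (j) (_ : j ≠ i), C j) ⊓ E i := by rw [← iSup_split_single, hC, top_inf_eq]
    _ = C i := by rw [sup_inf_assoc_of_le _ (hle i), hrest, sup_bot_eq]

theorem exists_eigenspace_eq_of_isInternal {K M ι : Type*} [Field K] [AddCommGroup M] [Module K M]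
    [DecidableEq ι] {C : ι → Submodule K M} (hC : DirectSum.IsInternal C) {μ : ι → K}
    (hμ : Function.Injective μ) : ∃ Y : Module.End K M, ∀ i, eigenspace Y (μ i) = C i := by
  let e := LinearEquiv.ofBijective (DirectSum.coeLinearMap C) hC
  let Y := DirectSum.toModule K ι M (fun i => μ i • (C i).subtype) ∘ₗ e.symm.toLinearMap
  have hY : ∀ i, C i ≤ eigenspace Y (μ i) := fun i x hx => by
    have : e.symm x = DirectSum.lof K ι (fun i => C i) i ⟨x, hx⟩ :=
      e.symm_apply_eq.2 (DirectSum.coeLinearMap_of C i ⟨x, hx⟩).symm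
    rw [mem_eigenspace_iff, LinearMap.comp_apply, LinearEquiv.coe_coe, this,
      DirectSum.toModule_lof]
    rfl
  refine ⟨Y, congrFun (iSupIndep.eq_of_le_of_iSup_eq_top ?_ hY hC.submodule_iSup_eq_top).symm⟩
  exact (eigenspaces_iSupIndep Y).comp hμ

theorem iSupIndep_of_le_of_disjoint_pred {K M : Type*} [Ring K] [AddCommGroup M] [Module K M]
    {W C : ℤ → Submodule K M} (hW : Monotone W) (hCW : ∀ k, C k ≤ W k)
    (hdisj : ∀ k, Disjoint (C k) (W (k - 1))) : iSupIndep C := by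
  rw [iSupIndep_iff_finsetSum_eq_zero_imp_eq_zero]
  intro s
  induction s using Finset.induction_on_max with
  | empty => simp
  | insert k s hlt ih =>
    intro v hv hsum
    have hs : ∑ i ∈ s, v i ∈ W (k - 1) := Submodule.sum_mem _ fun i hi =>
      hW (Int.le_sub_one_of_lt (hlt i hi)) (hCW i (hv i (Finset.mem_insert_of_mem hi)))
    rw [Finset.sum_insert fun hk => (hlt k hk).false] at hsum
    have hk : v k = 0 := by
      refine (Submodule.disjoint_def.1 (hdisj k)) _ (hv k (Finset.mem_insert_self k s)) ?_
      rw [eq_neg_of_add_eq_zero_left hsum]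
      exact neg_mem hs
    rw [hk, zero_add] at hsum
    intro i hi
    rcases Finset.mem_insert.1 hi with rfl | hi
    · exact hk
    · exact ih v (fun j hj => hv j (Finset.mem_insert_of_mem hj)) hsum i hi

theorem le_iSup_of_le_sup_pred {α : Type*} [CompleteLattice α] {W C : ℤ → α} (hW : Monotone W)
    {a : ℤ} (ha : W a = ⊥) (hC : ∀ k, W k ≤ C k ⊔ W (k - 1)) (k : ℤ) :
    W k ≤ ⨆ (j) (_ : j ≤ k), C j := by
  obtain hk | hk := le_total k a
  · exact (hW hk).trans (ha.le.trans bot_le)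
  induction k, hk using Int.leInduction with
  | base => exact ha.le.trans bot_le
  | succ k _ ih =>
    refine (hC (k + 1)).trans (sup_le (le_iSup₂_of_le (k + 1) le_rfl le_rfl) ?_)
    rw [add_sub_cancel_right]
    exact ih.trans (iSup₂_mono' fun j hj => ⟨j, hj.trans (Int.le_add_one le_rfl), le_rfl⟩)

theorem exists_isGrading (W : ℤ → Submodule ℂ V) (hW : Monotone W) {a b : ℤ} (ha : W a = ⊥)
    (hb : W b = ⊤) : ∃ Y : Module.End ℂ V, IsGrading Y W := by
  choose C hdisj hsup using fun k =>
    IsModularLattice.exists_disjoint_and_sup_eq (hW (sub_one_lt k).le)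
  have hCW : ∀ k, C k ≤ W k := fun k => hsup k ▸ le_sup_right
  have hind : iSupIndep C := iSupIndep_of_le_of_disjoint_pred hW hCW fun k => (hdisj k).symm
  have htop : iSup C = ⊤ := by
    refine top_le_iff.1 (hb ▸ ?_)
    refine (le_iSup_of_le_sup_pred hW ha (fun k => ((sup_comm _ _).trans (hsup k)).ge) b).trans ?_
    exact iSup₂_le fun j _ => le_iSup C j
  obtain ⟨Y, hY⟩ := exists_eigenspace_eq_of_isInternal
    (DirectSum.isInternal_submodule_of_iSupIndep_of_iSup_eq_top hind htop) Int.cast_injective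
  refine ⟨Y, fun k => ?_⟩
  rw [hY k, ← hsup k, sup_comm, ← disjoint_iff]
  exact ⟨rfl, (hdisj k).symm⟩

section Lowering

variable {R M : Type*} [CommRing R] [AddCommGroup M] [Module R M] {W : ℤ → Submodule R M}

-- `lowering W 1` is the space `Lie₋₁` of the paper.
def lowering (W : ℤ → Submodule R M) (d : ℕ) : Submodule R (Module.End R M) where
  carrier := {f | ∀ k, ∀ v ∈ W k, f v ∈ W (k - d)}
  add_mem' hf hg k v hv := add_mem (hf k v hv) (hg k v hv)
  zero_mem' _ _ _ := zero_mem _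
  smul_mem' c _ hf k v hv := Submodule.smul_mem _ c (hf k v hv)

variable {d e : ℕ} {f g : Module.End R M}

theorem mem_lowering_iff_map_le : f ∈ lowering W d ↔ ∀ k, (W k).map f ≤ W (k - d) := by
  simp_rw [Submodule.map_le_iff_le_comap]
  rfl

theorem lowering_antitone (hW : Monotone W) : Antitone (lowering W) :=
  fun _ _ hde _ hf k v hv => hW (by omega) (hf k v hv)

theorem mul_mem_lowering (hf : f ∈ lowering W d) (hg : g ∈ lowering W e) :
    f * g ∈ lowering W (d + e) := fun k v hv => by
  simpa [sub_sub, add_comm] using hf _ _ (hg k v hv)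

theorem pow_mem_lowering (hf : f ∈ lowering W d) (n : ℕ) : f ^ n ∈ lowering W (n * d) := by
  induction n with
  | zero => intro k v hv; simpa using hv
  | succ n ih => simpa [pow_succ, add_mul, add_comm] using mul_mem_lowering ih hf

theorem lowering_eq_bot (hW : Monotone W) {a b : ℤ} (ha : W a = ⊥) (hb : W b = ⊤)
    (hd : b - a ≤ d) : lowering W d = ⊥ := by
  refine (Submodule.eq_bot_iff _).2 fun f hf => LinearMap.ext fun v => ?_
  have := hW (show b - d ≤ a by omega) (hf b v (hb ▸ Submodule.mem_top))
  simpa [ha] using this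

theorem add_pow_sub_pow_mem_lowering (hW : Monotone W) {α δ : Module.End R M}
    (hα : α ∈ lowering W d) (hδ : δ ∈ lowering W e) (hde : d ≤ e) (n : ℕ) :
    (α + δ) ^ (n + 1) - α ^ (n + 1) ∈ lowering W (e + n * d) := by
  induction n with
  | zero => simpa using hδ
  | succ n ih =>
    have hsum : α + δ ∈ lowering W d := add_mem hα (lowering_antitone hW hde hδ)
    have hstep : (α + δ) ^ (n + 1 + 1) - α ^ (n + 1 + 1)
        = (α + δ) * ((α + δ) ^ (n + 1) - α ^ (n + 1)) + δ * α ^ (n + 1) := by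
      rw [pow_succ' (α + δ), pow_succ' α]; noncomm_ring
    rw [hstep]
    refine add_mem ?_ ?_
    · convert mul_mem_lowering hsum ih using 2; ring
    · exact lowering_antitone hW (by nlinarith) (mul_mem_lowering hδ (pow_mem_lowering hα _))

theorem isNilpotent_of_mem_lowering (hW : Monotone W) {a b : ℤ} (ha : W a = ⊥) (hb : W b = ⊤)
    (hf : f ∈ lowering W d) (hd : 0 < d) : IsNilpotent f := by
  refine ⟨(b - a).toNat, ?_⟩
  have := pow_mem_lowering hf (b - a).toNat
  rwa [lowering_eq_bot hW ha hb (by push_cast; nlinarith [Int.self_le_toNat (b - a)]),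
    Submodule.mem_bot] at this

end Lowering

theorem IsNilpotent.pow_finrank_eq_zero {K M : Type*} [Field K] [AddCommGroup M] [Module K M]
    [FiniteDimensional K M] {f : Module.End K M} (hf : IsNilpotent f) : f ^ finrank K M = 0 := by
  simpa [hf.charpoly_eq_X_pow_finrank] using f.aeval_self_charpoly

theorem expNil_zero : expNil (0 : Module.End ℂ V) = 1 := by
  simp [expNil, Finset.sum_range_succ']

section ExpNil

variable [FiniteDimensional ℂ V] {W : ℤ → Submodule ℂ V} {e : ℕ}

theorem expNil_mul_expNil_neg {α : Module.End ℂ V} (hα : IsNilpotent α) :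
    expNil α * expNil (-α) = 1 := by
  let _ : Module ℚ (Module.End ℂ V) := Module.compHom _ (algebraMap ℚ ℂ)
  have hexp : ∀ β : Module.End ℂ V, IsNilpotent β → expNil β = IsNilpotent.exp β := fun β hβ => by
    rw [IsNilpotent.exp_eq_sum (pow_eq_zero_of_le (Nat.le_succ _) hβ.pow_finrank_eq_zero), expNil]
    refine Finset.sum_congr rfl fun i _ => ?_
    change _ = (algebraMap ℚ ℂ _) • (β ^ i)
    simp
  rw [hexp α hα, hexp _ hα.neg, IsNilpotent.exp_mul_exp_neg_self hα]

theorem expNil_add_sub_sub_mem_lowering (hW : Monotone W) {α δ : Module.End ℂ V}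
    (hα : α ∈ lowering W 1) (hδ : δ ∈ lowering W e) (he : 1 ≤ e) :
    expNil (α + δ) - expNil α - δ ∈ lowering W (e + 1) := by
  cases hN : finrank ℂ V with
  | zero =>
    have : Subsingleton V := Module.finrank_zero_iff.1 hN
    rw [Subsingleton.elim (expNil (α + δ) - expNil α - δ) 0]
    exact zero_mem _
  | succ N =>
    have hsum : expNil (α + δ) - expNil α - δ = ∑ i ∈ Finset.range N,
        (((i + 2).factorial : ℂ))⁻¹ • ((α + δ) ^ (i + 1 + 1) - α ^ (i + 1 + 1)) := by
      simp only [expNil, hN, Finset.sum_range_succ', smul_sub, Finset.sum_sub_distrib,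
        Nat.factorial_zero, Nat.factorial_one, Nat.cast_one, inv_one, one_smul, zero_add,
        pow_zero, pow_one, smul_add, add_sub_add_right_eq_sub]
      abel
    rw [hsum]
    refine Submodule.sum_mem _ fun i _ => Submodule.smul_mem _ _ ?_
    exact lowering_antitone hW (by simp) (add_pow_sub_pow_mem_lowering hW hα hδ he (i + 1))

theorem exists_expNil_sub_mem_lowering (hW : Monotone W) {g : Module.End ℂ V}
    (hg : g - 1 ∈ lowering W 1) (m : ℕ) :
    ∃ α ∈ lowering W 1, g - expNil α ∈ lowering W (m + 1) := by
  induction m with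
  | zero => exact ⟨0, zero_mem _, by rwa [expNil_zero]⟩
  | succ m ih =>
    obtain ⟨α, hα, hδ⟩ := ih
    refine ⟨α + (g - expNil α), add_mem hα (lowering_antitone hW (by simp) hδ), ?_⟩
    have := neg_mem (expNil_add_sub_sub_mem_lowering hW hα hδ (by simp))
    rwa [neg_sub, sub_sub, add_sub_cancel] at this

theorem exists_expNil_eq (hW : Monotone W) {a b : ℤ} (ha : W a = ⊥) (hb : W b = ⊤)
    {g : Module.End ℂ V} (hg : g - 1 ∈ lowering W 1) :
    ∃ α ∈ lowering W 1, expNil α = g := by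
  obtain ⟨α, hα, hgα⟩ := exists_expNil_sub_mem_lowering hW hg (b - a).toNat
  rw [lowering_eq_bot hW ha hb (by omega), Submodule.mem_bot, sub_eq_zero] at hgα
  exact ⟨α, hα, hgα.symm⟩

end ExpNil

theorem LinearMap.ext_of_iSup_eq_top {R M N ι : Type*} [Semiring R] [AddCommMonoid M] [Module R M]
    [AddCommMonoid N] [Module R N] {p : ι → Submodule R M} (hp : iSup p = ⊤)
    {f g : M →ₗ[R] N} (h : ∀ i, ∀ v ∈ p i, f v = g v) : f = g := by
  refine LinearMap.ext_on (s := ⋃ i, (p i : Set M)) (by rwa [← Submodule.iSup_eq_span]) ?_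
  intro v hv
  obtain ⟨i, hi⟩ := Set.mem_iUnion.1 hv
  exact h i v hi

section Eigenproj

variable {K M ι : Type*} [Field K] [AddCommGroup M] [Module K M] [DecidableEq ι]
  {Y : Module.End K M} {s : Finset ι} {μ : ι → K} {i j : ι} {v : M}

noncomputable def eigenproj (Y : Module.End K M) (s : Finset ι) (μ : ι → K) (i : ι) :
    Module.End K M :=
  aeval Y (Lagrange.basis s μ i)

theorem eigenproj_apply_of_mem_eigenspace (hv : v ∈ eigenspace Y (μ j)) :
    eigenproj Y s μ i v = (Lagrange.basis s μ i).eval (μ j) • v := by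
  rcases eq_or_ne v 0 with rfl | hne
  · simp
  · exact aeval_apply_of_hasEigenvector ⟨hv, hne⟩

theorem eigenproj_apply_self (hμ : Set.InjOn μ s) (hi : i ∈ s) (hv : v ∈ eigenspace Y (μ i)) :
    eigenproj Y s μ i v = v := by
  rw [eigenproj_apply_of_mem_eigenspace hv, Lagrange.eval_basis_self hμ hi, one_smul]

theorem eigenproj_apply_of_ne (hs : ∀ j ∉ s, eigenspace Y (μ j) = ⊥) (hij : i ≠ j)
    (hv : v ∈ eigenspace Y (μ j)) : eigenproj Y s μ i v = 0 := by
  by_cases hj : j ∈ s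
  · rw [eigenproj_apply_of_mem_eigenspace hv, Lagrange.eval_basis_of_ne hij hj, zero_smul]
  · rw [hs j hj, Submodule.mem_bot] at hv
    rw [hv, map_zero]

theorem eigenproj_apply_mem (hμ : Set.InjOn μ s) (hs : ∀ j ∉ s, eigenspace Y (μ j) = ⊥)
    (htop : ⨆ j, eigenspace Y (μ j) = ⊤) (hi : i ∈ s) (v : M) :
    eigenproj Y s μ i v ∈ eigenspace Y (μ i) := by
  suffices ⨆ j, eigenspace Y (μ j) ≤ (eigenspace Y (μ i)).comap (eigenproj Y s μ i) from
    this (htop ▸ Submodule.mem_top)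
  refine iSup_le fun j w hw => ?_
  rcases eq_or_ne i j with rfl | hij
  · rw [Submodule.mem_comap, eigenproj_apply_self hμ hi hw]
    exact hw
  · rw [Submodule.mem_comap, eigenproj_apply_of_ne hs hij hw]
    exact zero_mem _

end Eigenproj

namespace IsGrading

variable {W : ℤ → Submodule ℂ V} {Y Y₁ Y₂ : Module.End ℂ V} {a b : ℤ}

theorem eigenspace_le (hY : IsGrading Y W) (k : ℤ) : eigenspace Y (k : ℂ) ≤ W k :=
  (hY k).1 ▸ le_sup_left

theorem le_iSup_eigenspace (hY : IsGrading Y W) (hW : Monotone W) (ha : W a = ⊥) (k : ℤ) :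
    W k ≤ ⨆ (j) (_ : j ≤ k), eigenspace Y (j : ℂ) :=
  le_iSup_of_le_sup_pred hW ha (fun k => (hY k).1.le) k

theorem iSup_eigenspace_eq_top (hY : IsGrading Y W) (hW : Monotone W) (ha : W a = ⊥)
    (hb : W b = ⊤) : ⨆ j : ℤ, eigenspace Y (j : ℂ) = ⊤ :=
  top_le_iff.1 <| hb ▸ (hY.le_iSup_eigenspace hW ha b).trans
    (iSup₂_le fun j _ => le_iSup (fun j : ℤ => eigenspace Y (j : ℂ)) j)

theorem eigenspace_eq_bot_of_notMem (hY : IsGrading Y W) (hW : Monotone W) (ha : W a = ⊥)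
    (hb : W b = ⊤) {j : ℤ} (hj : j ∉ Finset.Ioc a b) : eigenspace Y (j : ℂ) = ⊥ := by
  rw [Finset.mem_Ioc, not_and_or, not_lt, not_le] at hj
  rcases hj with hj | hj
  · exact le_bot_iff.1 ((hY.eigenspace_le j).trans ((hW hj).trans ha.le))
  · have htop : W (j - 1) = ⊤ := top_le_iff.1 (hb ▸ hW (by omega))
    simpa [htop] using (hY j).2

theorem mem_lowering_of_eigenspace (hY : IsGrading Y W) (hW : Monotone W) (ha : W a = ⊥)
    {d : ℕ} {f : Module.End ℂ V} (hf : ∀ j : ℤ, ∀ v ∈ eigenspace Y (j : ℂ), f v ∈ W (j - d)) :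
    f ∈ lowering W d := fun k v hv =>
  (hY.le_iSup_eigenspace hW ha k).trans
    (iSup₂_le fun j hj w hw => hW (by omega) (hf j w hw) : _ ≤ (W (k - d)).comap f) hv

theorem eigenproj_apply_sub_mem (hY : IsGrading Y W) (hW : Monotone W) (ha : W a = ⊥)
    {s : Finset ℤ} (hs : ∀ j ∉ s, eigenspace Y (j : ℂ) = ⊥) {k : ℤ} (hk : k ∈ s) {v : V}
    (hv : v ∈ W k) : eigenproj Y s Int.cast k v - v ∈ W (k - 1) := by
  obtain ⟨u, hu, w, hw, rfl⟩ := Submodule.mem_sup.1 ((hY k).1 ▸ hv)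
  have hw0 : eigenproj Y s Int.cast k w = 0 := by
    refine (hY.le_iSup_eigenspace hW ha (k - 1)).trans
      (iSup₂_le fun j hj x hx => ?_ : _ ≤ LinearMap.ker (eigenproj Y s Int.cast k)) hw
    exact eigenproj_apply_of_ne hs (by omega) hx
  rw [map_add, eigenproj_apply_self Int.cast_injective.injOn hk hu, hw0, add_zero,
    sub_add_cancel_left]
  exact neg_mem hw

theorem exists_intertwiner (hY₁ : IsGrading Y₁ W) (hY₂ : IsGrading Y₂ W) (hW : Monotone W)
    (ha : W a = ⊥) (hb : W b = ⊤) :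
    ∃ g : Module.End ℂ V, g - 1 ∈ lowering W 1 ∧ g * Y₁ = Y₂ * g := by
  set s := Finset.Ioc a b
  have hs₁ : ∀ j ∉ s, eigenspace Y₁ (j : ℂ) = ⊥ := fun _ => hY₁.eigenspace_eq_bot_of_notMem hW ha hb
  have hs₂ : ∀ j ∉ s, eigenspace Y₂ (j : ℂ) = ⊥ := fun _ => hY₂.eigenspace_eq_bot_of_notMem hW ha hb
  set g := ∑ k ∈ s, eigenproj Y₂ s Int.cast k * eigenproj Y₁ s Int.cast k
  have hg : ∀ j ∈ s, ∀ v ∈ eigenspace Y₁ (j : ℂ), g v = eigenproj Y₂ s Int.cast j v := by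
    intro j hj v hv
    rw [LinearMap.sum_apply, Finset.sum_eq_single_of_mem j hj fun k _ hkj => by
      rw [Module.End.mul_apply, eigenproj_apply_of_ne hs₁ hkj hv, map_zero]]
    rw [Module.End.mul_apply, eigenproj_apply_self Int.cast_injective.injOn hj hv]
  have hzero : ∀ j ∉ s, ∀ v ∈ eigenspace Y₁ (j : ℂ), v = 0 := fun j hj v hv => by
    rwa [hs₁ j hj, Submodule.mem_bot] at hv
  refine ⟨g, hY₁.mem_lowering_of_eigenspace hW ha fun j v hv => ?_,
    LinearMap.ext_of_iSup_eq_top (hY₁.iSup_eigenspace_eq_top hW ha hb) fun j v hv => ?_⟩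
  · by_cases hj : j ∈ s
    · rw [LinearMap.sub_apply, hg j hj v hv, Module.End.one_apply]
      exact hY₂.eigenproj_apply_sub_mem hW ha hs₂ hj (hY₁.eigenspace_le j hv)
    · simp [hzero j hj v hv]
  · by_cases hj : j ∈ s
    · have hgv : g v ∈ eigenspace Y₂ (j : ℂ) := hg j hj v hv ▸
        eigenproj_apply_mem Int.cast_injective.injOn hs₂ (hY₂.iSup_eigenspace_eq_top hW ha hb) hj v
      rw [Module.End.mul_apply, Module.End.mul_apply, mem_eigenspace_iff.1 hv, map_smul,
        mem_eigenspace_iff.1 hgv]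
    · simp [hzero j hj v hv]

end IsGrading

/-- The set of gradings of a finite increasing filtration `W` of a finite-dimensional
vector space is nonempty, and the nilpotent group `exp(Lie₋₁)`,
where `Lie₋₁ = {α | α (W k) ⊆ W (k-1) for all k}`, acts transitively on it
(by conjugation). -/
theorem gradings_nonempty_and_transitive
    [FiniteDimensional ℂ V] (W : ℤ → Submodule ℂ V)
    (hmono : Monotone W) (hbot : ∃ a : ℤ, W a = ⊥) (htop : ∃ b : ℤ, W b = ⊤) :
    (∃ Y : Module.End ℂ V, IsGrading Y W) ∧
    ∀ Y₁ Y₂ : Module.End ℂ V, IsGrading Y₁ W → IsGrading Y₂ W →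
      ∃ α : Module.End ℂ V, (∀ k : ℤ, (W k).map α ≤ W (k - 1)) ∧
        Y₂ = expNil α * Y₁ * expNil (-α) := by
  obtain ⟨a, ha⟩ := hbot
  obtain ⟨b, hb⟩ := htop
  refine ⟨exists_isGrading W hmono ha hb, fun Y₁ Y₂ hY₁ hY₂ => ?_⟩
  obtain ⟨g, hg, hgY⟩ := hY₁.exists_intertwiner hY₂ hmono ha hb
  obtain ⟨α, hα, rfl⟩ := exists_expNil_eq hmono ha hb hg
  refine ⟨α, mem_lowering_iff_map_le.1 hα, ?_⟩
  calc Y₂ = Y₂ * (expNil α * expNil (-α)) := by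
        rw [expNil_mul_expNil_neg (isNilpotent_of_mem_lowering hmono ha hb hα one_pos), mul_one]
    _ = expNil α * Y₁ * expNil (-α) := by rw [← mul_assoc, hgY]
end

section
/- Let V be a finite-dimensional ℂ-vector space with a non-degenerate bilinear form Q, and let N be a nilpotent endomorphism of V acting by infinitesimal isometries of Q (i.e. Q(Nu, v) + Q(u, Nv) = 0). Then the monodromy weight filtration of N is self-dual with respect to Q: W_j(N) = W_{-j-1}(N)^⊥ for all j. -/
/-!
Two facts combine. First, `Q (W a) (W b) = 0` whenever `a + b < 0`: an element of `W (-m)` is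
`N ^ m w` modulo `W (-m - 1)` with `w ∈ W m`, skewness moves `N ^ m` onto the other factor
(landing in `W (a - 2m)`), and both resulting pairs are smaller for the descent measure
`a + b + min a b`, which bottoms out where one of the two pieces is `0`.
Second, `N ^ m` induces `Gr_m ≅ Gr_{-m}`, which makes `dim W j + dim W (-j - 1)` independent of
`j`, hence equal to `dim V`. So `W j ≤ W (-j - 1)ᗮ` and both sides have dimension
`dim V - dim W (-j - 1)`.
-/

variable {V : Type*} [AddCommGroup V] [Module ℂ V]

def IsMonodromyWeightFiltration (N : Module.End ℂ V) (W : ℤ → Submodule ℂ V) : Prop :=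
  Monotone W ∧
  (∃ d : ℕ, (∀ j : ℤ, j < -(d : ℤ) → W j = ⊥) ∧ (∀ j : ℤ, (d : ℤ) ≤ j → W j = ⊤)) ∧
  (∀ j : ℤ, (W j).map N ≤ W (j - 2)) ∧
  (∀ j : ℕ, ∀ v ∈ W (j : ℤ), (N ^ j) v ∈ W (-(j : ℤ) - 1) → v ∈ W ((j : ℤ) - 1)) ∧
  (∀ j : ℕ, ∀ v ∈ W (-(j : ℤ)), ∃ u ∈ W (j : ℤ), (N ^ j) u - v ∈ W (-(j : ℤ) - 1))

open Module

theorem LinearMap.BilinForm.apply_pow_left {R M : Type*} [CommRing R] [AddCommGroup M] [Module R M]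
    {Q : LinearMap.BilinForm R M} {N : Module.End R M} (hN : ∀ u v, Q (N u) v + Q u (N v) = 0)
    (p : ℕ) (u v : M) : Q ((N ^ p) u) v = (-1) ^ p * Q u ((N ^ p) v) := by
  induction p generalizing u with
  | zero => simp
  | succ p ih =>
    rw [pow_succ, Module.End.mul_apply, ih, eq_neg_of_add_eq_zero_left (hN u _),
      ← Module.End.mul_apply, ← pow_succ', pow_succ]
    ring

namespace IsMonodromyWeightFiltration

variable {N : Module.End ℂ V} {W : ℤ → Submodule ℂ V}

theorem pow_mem (hW : IsMonodromyWeightFiltration N W) {j : ℤ} {v : V} (hv : v ∈ W j) (p : ℕ) :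
    (N ^ p) v ∈ W (j - 2 * p) := by
  induction p with
  | zero => simpa using hv
  | succ p ih =>
    rw [pow_succ', Module.End.mul_apply, show j - 2 * ↑(p + 1) = j - 2 * p - 2 by push_cast; ring]
    exact hW.2.2.1 _ (Submodule.mem_map_of_mem ih)

theorem apply_eq_zero_of_mem_neg (hW : IsMonodromyWeightFiltration N W)
    {Q : LinearMap.BilinForm ℂ V} (hN : ∀ u v, Q (N u) v + Q u (N v) = 0) {a : ℤ} {m : ℕ}
    (hpow : ∀ u ∈ W (a - 2 * m), ∀ w ∈ W m, Q u w = 0)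
    (hlow : ∀ u ∈ W a, ∀ r ∈ W (-m - 1), Q u r = 0) {u v : V} (hu : u ∈ W a) (hv : v ∈ W (-m)) :
    Q u v = 0 := by
  obtain ⟨w, hw, hwv⟩ := hW.2.2.2.2 m v hv
  have hNw : Q u ((N ^ m) w) = 0 := by
    have h := Q.apply_pow_left hN m u w
    rw [hpow _ (hW.pow_mem hu m) w hw, eq_comm] at h
    exact (mul_eq_zero.mp h).resolve_left (pow_ne_zero _ (neg_ne_zero.mpr one_ne_zero))
  calc Q u v = Q u ((N ^ m) w) - Q u ((N ^ m) w - v) := by simp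
    _ = 0 := by rw [hNw, hlow u hu _ hwv, sub_zero]

theorem apply_eq_zero_of_add_neg (hW : IsMonodromyWeightFiltration N W)
    {Q : LinearMap.BilinForm ℂ V} (hN : ∀ u v, Q (N u) v + Q u (N v) = 0) {a b : ℤ}
    (hab : a + b < 0) {u v : V} (hu : u ∈ W a) (hv : v ∈ W b) : Q u v = 0 := by
  obtain ⟨d, hbot, -⟩ := hW.2.1
  have hNflip : ∀ u v, Q.flip (N u) v + Q.flip u (N v) = 0 := fun u v => by
    simpa [add_comm] using hN v u
  have hsmall : ∀ a b : ℤ, min a b < -d → ∀ u ∈ W a, ∀ v ∈ W b, Q u v = 0 := by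
    intro a b hmin u hu v hv
    rcases min_lt_iff.mp hmin with h | h
    · simp [(Submodule.eq_bot_iff _).mp (hbot a h) u hu]
    · simp [(Submodule.eq_bot_iff _).mp (hbot b h) v hv]
  -- `a + b + min a b ≥ -3 d` unless one of the pieces vanishes
  suffices key : ∀ n : ℕ, ∀ a b : ℤ, a + b < 0 → a + b + min a b + 3 * d < n →
      ∀ u ∈ W a, ∀ v ∈ W b, Q u v = 0 from
    key ((a + b + min a b + 3 * d).toNat + 1) a b hab (by omega) u hu v hv
  intro n
  induction n with
  | zero => exact fun a b _ hn => hsmall a b (by omega)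
  | succ n ih =>
    intro a b hab hn u hu v hv
    by_cases hmin : min a b < -d
    · exact hsmall a b hmin u hu v hv
    rcases lt_or_ge b 0 with hb | hb
    · obtain ⟨m, rfl⟩ : ∃ m : ℕ, b = -m := ⟨b.natAbs, by omega⟩
      exact hW.apply_eq_zero_of_mem_neg hN
        (fun x hx w hw => ih _ _ (by omega) (by omega) x hx w hw)
        (fun x hx r hr => ih _ _ (by omega) (by omega) x hx r hr) hu hv
    · obtain ⟨k, rfl⟩ : ∃ k : ℕ, a = -k := ⟨a.natAbs, by omega⟩
      exact hW.apply_eq_zero_of_mem_neg hNflip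
        (fun x hx w hw => ih _ _ (by omega) (by omega) w hw x hx)
        (fun x hx r hr => ih _ _ (by omega) (by omega) r hr x hx) hv hu

theorem finrank_eq_finrank_pred_add_finrank_quotient [FiniteDimensional ℂ V]
    (hW : IsMonodromyWeightFiltration N W) (m : ℕ) :
    finrank ℂ (W m) =
      finrank ℂ (W (m - 1)) + finrank ℂ (W (-m) ⧸ (W (-m - 1)).comap (W (-m)).subtype) := by
  have hmaps : ∀ x ∈ W m, (N ^ m) x ∈ W (-m) := fun x hx => by
    simpa [two_mul] using hW.pow_mem hx m
  let f := ((W (-m - 1)).comap (W (-m)).subtype).mkQ ∘ₗ (N ^ m).restrict hmaps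
  have hker : LinearMap.ker f = (W (m - 1)).comap (W m).subtype := by
    ext x
    simp only [f, LinearMap.mem_ker, LinearMap.comp_apply, Submodule.mkQ_apply,
      Submodule.Quotient.mk_eq_zero, Submodule.mem_comap, Submodule.subtype_apply,
      LinearMap.coe_restrict_apply]
    refine ⟨hW.2.2.2.1 m x x.2, fun hx => ?_⟩
    have := hW.pow_mem hx m
    rwa [show (m - 1 : ℤ) - 2 * m = -m - 1 by ring] at this
  have hsurj : Function.Surjective f := by
    intro z
    obtain ⟨z, rfl⟩ := Submodule.mkQ_surjective _ z
    obtain ⟨u, hu, huz⟩ := hW.2.2.2.2 m z z.2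
    exact ⟨⟨u, hu⟩, (Submodule.Quotient.eq _).mpr huz⟩
  rw [← f.finrank_range_add_finrank_ker, LinearMap.range_eq_top.mpr hsurj, finrank_top, hker,
    (Submodule.comapSubtypeEquivOfLe (hW.1 (Int.sub_le_self _ zero_le_one))).finrank_eq, add_comm]

theorem finrank_add_finrank_neg_sub_one_eq_pred [FiniteDimensional ℂ V]
    (hW : IsMonodromyWeightFiltration N W) (j : ℤ) :
    finrank ℂ (W j) + finrank ℂ (W (-j - 1)) = finrank ℂ (W (j - 1)) + finrank ℂ (W (-j)) := by
  have hquot : ∀ k : ℤ,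
      finrank ℂ (W k ⧸ (W (k - 1)).comap (W k).subtype) + finrank ℂ (W (k - 1)) =
        finrank ℂ (W k) := fun k => by
    rw [← (Submodule.comapSubtypeEquivOfLe (hW.1 (Int.sub_le_self k zero_le_one))).finrank_eq]
    exact Submodule.finrank_quotient_add_finrank _
  obtain ⟨m, hm⟩ := Int.eq_nat_or_neg j
  have hgr := hW.finrank_eq_finrank_pred_add_finrank_quotient m
  have hgr_neg := hquot (-m)
  rcases hm with rfl | rfl
  · omega
  · rw [neg_neg]
    omega

theorem finrank_add_finrank_neg_sub_one [FiniteDimensional ℂ V]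
    (hW : IsMonodromyWeightFiltration N W) (j : ℤ) :
    finrank ℂ (W j) + finrank ℂ (W (-j - 1)) = finrank ℂ V := by
  obtain ⟨d, hbot, htop⟩ := hW.2.1
  have hdesc : ∀ k : ℕ, finrank ℂ (W j) + finrank ℂ (W (-j - 1)) =
      finrank ℂ (W (j - k)) + finrank ℂ (W (-(j - k) - 1)) := by
    intro k
    induction k with
    | zero => rw [Nat.cast_zero, sub_zero]
    | succ k ih =>
      rw [ih, hW.finrank_add_finrank_neg_sub_one_eq_pred,
        show j - ↑(k + 1) = j - k - 1 by push_cast; ring, show -(j - k - 1) - 1 = -(j - k) by ring]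
  rw [hdesc (j + d + 1).toNat, hbot _ (by omega), htop _ (by omega), finrank_bot, finrank_top,
    zero_add]

end IsMonodromyWeightFiltration

theorem monodromy_weight_filtration_self_dual_general
    [FiniteDimensional ℂ V] (Q : LinearMap.BilinForm ℂ V)
    (hQ : Q.Nondegenerate) (N : Module.End ℂ V)
    (hiso : ∀ u v : V, Q (N u) v + Q u (N v) = 0)
    (W : ℤ → Submodule ℂ V) (hW : IsMonodromyWeightFiltration N W) :
    ∀ j : ℤ, W j = LinearMap.BilinForm.orthogonal Q (W (-j - 1)) := by
  intro j
  refine Submodule.eq_of_le_of_finrank_eq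
    (fun v hv u hu => hW.apply_eq_zero_of_add_neg hiso (by omega) hu hv) ?_
  rw [LinearMap.BilinForm.finrank_orthogonal hQ]
  have := hW.finrank_add_finrank_neg_sub_one j
  omega

/-- If `N` is a nilpotent infinitesimal isometry of a non-degenerate bilinear form
`Q`, then the monodromy weight filtration of `N` is self-dual:
`W j = W (-j-1)^⊥`. -/
theorem monodromy_weight_filtration_self_dual
    [FiniteDimensional ℂ V] (Q : LinearMap.BilinForm ℂ V)
    (hQ : Q.Nondegenerate) (N : Module.End ℂ V) (hnil : IsNilpotent N)
    (hiso : ∀ u v : V, Q (N u) v + Q u (N v) = 0)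
    (W : ℤ → Submodule ℂ V) (hW : IsMonodromyWeightFiltration N W) :
    ∀ j : ℤ, W j = LinearMap.BilinForm.orthogonal Q (W (-j - 1)) :=
  monodromy_weight_filtration_self_dual_general Q hQ N hiso W hW
end
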